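/- Consider the multiplex engagement game on a multiplex network G = (V, E, L) with a non-decreasing summarizer S : ℕ^L → ℝ_{≥0}^d and thresholds k ∈ ℝ_{≥0}^d: a strategy profile is a set C ⊆ V of engaged users, and C is an equilibrium if no engaged user prefers to drop out, i.e., every v ∈ C satisfies S(deg^C(v))_i ≥ k_i for all 1 ≤ i ≤ d (so that its utility vector S(deg^C(v)) − k is componentwise nonnegative, weakly better than the zero utility of dropping out). Then the k-S-core of G is the unique maximal equilibrium of this game: it is an equilibrium, every equilibrium profile is contained in it, and it is the only equilibrium with this property. -/
import Mathlib


/-- The degree of vertex `v` within the vertex subset `H` in layer `ℓ` of the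
multiplex network `G`. -/
def mdeg {V L : Type*} (G : L → SimpleGraph V) [∀ ℓ, DecidableRel (G ℓ).Adj]
    (H : Finset V) (ℓ : L) (v : V) : ℕ :=
  (H.filter fun u => (G ℓ).Adj v u).card

/-- A strategy profile `C` (the set of engaged users) is an equilibrium of the multiplex
engagement game: no engaged user prefers to drop out, i.e. every `v ∈ C` has
`S(deg^C(v))_i ≥ k_i` for all `i` (its utility vector `S(deg^C(v)) − k` is componentwise
nonnegative, weakly better than the zero utility of dropping out). -/
def IsEquilibrium {V L : Type*} {d : ℕ} (G : L → SimpleGraph V)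
    [∀ ℓ, DecidableRel (G ℓ).Adj]
    (S : (L → ℕ) → Fin d → NNReal) (k : Fin d → NNReal) (C : Finset V) : Prop :=
  ∀ v ∈ C, ∀ i, k i ≤ S (fun ℓ => mdeg G C ℓ v) i

/-- `C` is the `k`-`S`-core of `G`: the (unique) maximal subset of vertices
satisfying the `(k, S)`-degree condition. -/
def IsSCore {V L : Type*} {d : ℕ} (G : L → SimpleGraph V)
    [∀ ℓ, DecidableRel (G ℓ).Adj]
    (S : (L → ℕ) → Fin d → NNReal) (k : Fin d → NNReal) (C : Finset V) : Prop :=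
  IsEquilibrium G S k C ∧ ∀ D : Finset V, IsEquilibrium G S k D → D ⊆ C

/-- The `k`-`S`-core of a multiplex network is the unique maximal equilibrium of the
multiplex engagement game: it exists, it is an equilibrium, every equilibrium profile is
contained in it, and it is the only equilibrium with this property. -/
theorem sCore_unique_maximal_equilibrium
    {V L : Type*} {d : ℕ} [Fintype V] [DecidableEq V] [Fintype L] [Nonempty L]
    (G : L → SimpleGraph V) [∀ ℓ, DecidableRel (G ℓ).Adj]
    (S : (L → ℕ) → Fin d → NNReal) (hS : Monotone S) (k : Fin d → NNReal) :
    (∃ Ck : Finset V, IsSCore G S k Ck) ∧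
      ∀ Ck : Finset V, IsSCore G S k Ck →
        IsEquilibrium G S k Ck ∧
          (∀ C : Finset V, IsEquilibrium G S k C → C ⊆ Ck) ∧
          ∀ C' : Finset V, IsEquilibrium G S k C' →
            (∀ C : Finset V, IsEquilibrium G S k C → C ⊆ C') → C' = Ck := by
  classical
  set Ck : Finset V := Finset.univ.filter (fun v => ∃ C, IsEquilibrium G S k C ∧ v ∈ C)
    with hCk
  have hsub : ∀ C : Finset V, IsEquilibrium G S k C → C ⊆ Ck := by
    intro C hC v hv
    simp only [hCk, Finset.mem_filter, Finset.mem_univ, true_and]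
    exact ⟨C, hC, hv⟩
  have hdeg : ∀ (C D : Finset V), C ⊆ D → ∀ ℓ v, mdeg G C ℓ v ≤ mdeg G D ℓ v := by
    intro C D hCD ℓ v
    exact Finset.card_le_card (Finset.filter_subset_filter _ hCD)
  have hEq : IsEquilibrium G S k Ck := by
    intro v hv i
    simp only [hCk, Finset.mem_filter, Finset.mem_univ, true_and] at hv
    obtain ⟨C, hC, hvC⟩ := hv
    calc k i ≤ S (fun ℓ => mdeg G C ℓ v) i := hC v hvC i
      _ ≤ S (fun ℓ => mdeg G Ck ℓ v) i := hS (fun ℓ => hdeg C Ck (hsub C hC) ℓ v) i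
  refine ⟨⟨Ck, hEq, hsub⟩, ?_⟩
  rintro D ⟨hD1, hD2⟩
  refine ⟨hD1, hD2, ?_⟩
  intro C' hC' hmax
  exact Finset.Subset.antisymm (hD2 C' hC') (hmax D hD1)
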